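/- Let a ≥ 1 and let X_1, …, X_N be independent nonnegative integrable random variables, and set S = X_1 + ⋯ + X_N. Then E[S · log^{(a)}(S)] ≤ E[S] · log^{(a)}(E[S]) + Σ_{i=1}^N E[X_i · log^{(a)}(X_i)], where the expectations of the (nonnegative) quantities involving log^{(a)} are taken with values in [0,∞]. -/

import Mathlib

open MeasureTheory ProbabilityTheory

/-- `log^{(a)}(x) = (a/e)^a · x` for `x < e^a`, and `(log x)^a` for `x ≥ e^a`. -/
noncomputable def logA (a : ℝ) (x : ℝ) : ℝ :=
  if x < Real.exp a then (a / Real.exp 1) ^ a * x else Real.log x ^ a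

/-!
The constant `(a/e)^a` is the slope of `(log x)^a` at `x = e^a`, so below `e^a` the function
`log^{(a)}` is the tangent line of `(log x)^a` through the origin, and `log^{(a)}` is concave on
`[0, ∞)`: the tangent lines of `(log x)^a` at points `m ≥ e^a` lie above it, which after the
substitution `u = log y`, `v = log m` follows from `1 + t ≤ eᵗ` and the convexity of `exp`.
Being concave with `log^{(a)}(0) = 0`, it is subadditive, so with `Tᵢ = S - Xᵢ`
`S log^{(a)}(S) ≤ ∑ Xᵢ log^{(a)}(Xᵢ) + ∑ Xᵢ log^{(a)}(Tᵢ)`.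
As `Xᵢ` is independent of `Tᵢ`, Jensen's inequality and monotonicity give
`E[Xᵢ log^{(a)}(Tᵢ)] = E[Xᵢ] E[log^{(a)}(Tᵢ)] ≤ E[Xᵢ] log^{(a)}(E[S])`, and these sum to
`E[S] log^{(a)}(E[S])`.
-/

section

open Real Set

theorem rpow_le_rpow_add_mul_exp_sub_one {a u v : ℝ} (ha : 0 ≤ a) (hav : a ≤ v) (hv : 0 < v)
    (hu : 0 ≤ u) : u ^ a ≤ v ^ a + a * v ^ (a - 1) * (exp (u - v) - 1) := by
  have hθ : a / v ≤ 1 := (div_le_one hv).2 hav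
  have hθ0 : 0 ≤ a / v := div_nonneg ha hv.le
  have hratio : u / v ≤ exp ((u - v) / v) :=
    calc u / v = (u - v) / v + 1 := by field_simp; ring
      _ ≤ _ := add_one_le_exp _
  have hconv : exp (a / v * (u - v)) ≤ 1 + a / v * (exp (u - v) - 1) := by
    have := convexOn_exp.2 (mem_univ 0) (mem_univ (u - v)) (sub_nonneg.2 hθ) hθ0 (by ring)
    simp only [smul_eq_mul, mul_zero, zero_add, exp_zero, mul_one] at this
    linarith
  calc u ^ a = v ^ a * (u / v) ^ a := by
        rw [div_rpow hu hv.le, mul_div_cancel₀ _ (rpow_pos_of_pos hv a).ne']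
    _ ≤ v ^ a * exp (a / v * (u - v)) := by
        gcongr
        calc (u / v) ^ a ≤ exp ((u - v) / v) ^ a := by gcongr
          _ = exp (a / v * (u - v)) := by rw [← exp_mul]; ring_nf
    _ ≤ v ^ a * (1 + a / v * (exp (u - v) - 1)) := by gcongr
    _ = v ^ a + a * v ^ (a - 1) * (exp (u - v) - 1) := by
        rw [rpow_sub_one hv.ne']; ring

variable {a : ℝ}

theorem logA_of_lt {x : ℝ} (h : x < exp a) : logA a x = (a / exp 1) ^ a * x := if_pos h

theorem logA_of_exp_le {x : ℝ} (h : exp a ≤ x) : logA a x = log x ^ a := if_neg h.not_gt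

theorem logA_zero : logA a 0 = 0 := by simp [logA_of_lt (exp_pos a)]

theorem div_exp_one_rpow_mul_exp (ha : 0 ≤ a) : (a / exp 1) ^ a * exp a = a ^ a := by
  rw [div_rpow ha (exp_pos 1).le, exp_one_rpow, div_mul_cancel₀ _ (exp_pos a).ne']

theorem logA_exp : logA a (exp a) = a ^ a := by
  rw [logA_of_exp_le le_rfl, log_exp]

theorem logA_nonneg (ha : 0 ≤ a) {x : ℝ} (hx : 0 ≤ x) : 0 ≤ logA a x := by
  rcases lt_or_ge x (exp a) with h | h
  · rw [logA_of_lt h]; positivity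
  · rw [logA_of_exp_le h]
    exact rpow_nonneg (ha.trans ((le_log_iff_exp_le ((exp_pos a).trans_le h)).2 h)) a

theorem monotone_logA (ha : 0 ≤ a) : Monotone (logA a) := by
  intro x y hxy
  have hlog : ∀ {z}, exp a ≤ z → a ≤ log z := fun h =>
    (le_log_iff_exp_le ((exp_pos a).trans_le h)).2 h
  rcases lt_or_ge y (exp a) with hy | hy
  · rw [logA_of_lt (hxy.trans_lt hy), logA_of_lt hy]; gcongr
  rcases lt_or_ge x (exp a) with hx' | hx'
  · rw [logA_of_lt hx', logA_of_exp_le hy]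
    calc (a / exp 1) ^ a * x ≤ (a / exp 1) ^ a * exp a := by gcongr
      _ ≤ log y ^ a := by rw [div_exp_one_rpow_mul_exp ha]; exact rpow_le_rpow ha (hlog hy) ha
  · rw [logA_of_exp_le hx', logA_of_exp_le hy]
    exact rpow_le_rpow (ha.trans (hlog hx')) (log_le_log ((exp_pos a).trans_le hx') hxy) ha

theorem continuous_logA (ha : 0 ≤ a) : Continuous (logA a) := by
  have : logA a = fun x => if exp a ≤ x then log x ^ a else (a / exp 1) ^ a * x := by
    ext x; simp only [logA, ← not_le, ite_not]
  rw [this]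
  refine continuous_if_le continuous_const continuous_id ?_ (by fun_prop) ?_
  · refine (continuousOn_log.mono fun x hx => ?_).rpow_const fun _ _ => Or.inr ha
    exact ((exp_pos a).trans_le hx).ne'
  · rintro x rfl
    rw [log_exp, div_exp_one_rpow_mul_exp ha]

theorem logA_le_add_mul_sub (ha : 0 < a) {m y : ℝ} (hm : exp a ≤ m) (hy : 0 ≤ y) :
    logA a y ≤ logA a m + a * log m ^ (a - 1) / m * (y - m) := by
  have hm0 : 0 < m := (exp_pos a).trans_le hm
  have hav : a ≤ log m := (le_log_iff_exp_le hm0).2 hm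
  have hv0 : 0 < log m := ha.trans_le hav
  rw [logA_of_exp_le hm]
  set v := log m
  set k := a * v ^ (a - 1) / m
  have hlog : ∀ z, exp a ≤ z → log z ^ a ≤ v ^ a + k * (z - m) := by
    intro z hz
    have hz0 : 0 < z := (exp_pos a).trans_le hz
    have := rpow_le_rpow_add_mul_exp_sub_one ha.le hav hv0
      (ha.le.trans ((le_log_iff_exp_le hz0).2 hz))
    rw [exp_sub, exp_log hz0, exp_log hm0] at this
    convert this using 2
    simp only [k]
    field_simp
  rcases lt_or_ge y (exp a) with hy' | hy'
  · rw [logA_of_lt hy']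
    have hend : (a / exp 1) ^ a * exp a ≤ v ^ a + k * (exp a - m) := by
      simpa [div_exp_one_rpow_mul_exp ha.le] using hlog (exp a) le_rfl
    have hzero : 0 ≤ v ^ a + k * (0 - m) := by
      have hkm : k * m = a / v * v ^ a := by
        simp only [k, rpow_sub_one hv0.ne']; field_simp
      have : a / v * v ^ a ≤ 1 * v ^ a := by
        gcongr; exact (div_le_one hv0).2 hav
      linarith
    -- both sides are affine in `y`, so it suffices to compare them at `0` and at `exp a`
    nlinarith [mul_le_mul_of_nonneg_left hend hy, mul_nonneg (sub_nonneg.2 hy'.le) hzero,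
      exp_pos a]
  · rw [logA_of_exp_le hy']
    exact hlog y hy'

theorem logA_le_mul (ha : 0 < a) {y : ℝ} (hy : 0 ≤ y) : logA a y ≤ (a / exp 1) ^ a * y := by
  have hslope : a * a ^ (a - 1) / exp a = (a / exp 1) ^ a := by
    rw [eq_div_of_mul_eq (exp_pos a).ne' (div_exp_one_rpow_mul_exp ha.le), rpow_sub_one ha.ne']
    field_simp
  have := logA_le_add_mul_sub ha le_rfl hy
  rw [logA_exp, log_exp, hslope, ← div_exp_one_rpow_mul_exp ha.le] at this
  linarith

theorem concaveOn_of_forall_exists_le_add_mul_sub {s : Set ℝ} {f : ℝ → ℝ} (hs : Convex ℝ s)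
    (h : ∀ m ∈ s, ∃ k, ∀ y ∈ s, f y ≤ f m + k * (y - m)) : ConcaveOn ℝ s f := by
  refine ⟨hs, fun x hx y hy p q hp hq hpq => ?_⟩
  obtain ⟨k, hk⟩ := h _ (hs hx hy hp hq hpq)
  obtain rfl : q = 1 - p := by linarith
  simp only [smul_eq_mul] at hk ⊢
  nlinarith [mul_le_mul_of_nonneg_left (hk x hx) hp, mul_le_mul_of_nonneg_left (hk y hy) hq]

theorem concaveOn_logA (ha : 0 < a) : ConcaveOn ℝ (Ici 0) (logA a) := by
  refine concaveOn_of_forall_exists_le_add_mul_sub (convex_Ici 0) fun m _ => ?_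
  rcases lt_or_ge m (exp a) with hm | hm
  · refine ⟨(a / exp 1) ^ a, fun y hy => ?_⟩
    rw [logA_of_lt hm]
    linarith [logA_le_mul ha hy]
  · exact ⟨_, fun y hy => logA_le_add_mul_sub ha hm hy⟩

theorem ConcaveOn.map_add_le {f : ℝ → ℝ} (hf : ConcaveOn ℝ (Ici 0) f) (h0 : 0 ≤ f 0) {x y : ℝ}
    (hx : 0 ≤ x) (hy : 0 ≤ y) : f (x + y) ≤ f x + f y := by
  rcases (add_nonneg hx hy).eq_or_lt with ht | ht
  · obtain ⟨rfl, rfl⟩ : x = 0 ∧ y = 0 := ⟨by linarith, by linarith⟩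
    simpa using h0
  have hseg : ∀ z, 0 ≤ z → z ≤ x + y → z / (x + y) * f (x + y) ≤ f z := by
    intro z hz hzt
    have hθ : z / (x + y) ≤ 1 := (div_le_one ht).2 hzt
    have := hf.2 (mem_Ici.2 ht.le) (mem_Ici.2 le_rfl) (div_nonneg hz ht.le) (sub_nonneg.2 hθ)
      (add_sub_cancel _ _)
    simp only [smul_eq_mul, mul_zero, add_zero, div_mul_cancel₀ _ ht.ne'] at this
    nlinarith [mul_nonneg (sub_nonneg.2 hθ) h0]
  have hsum : x / (x + y) * f (x + y) + y / (x + y) * f (x + y) = f (x + y) := by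
    field_simp
  linarith [hseg x hx (by linarith), hseg y hy (by linarith)]

theorem logA_add_le (ha : 0 < a) {x y : ℝ} (hx : 0 ≤ x) (hy : 0 ≤ y) :
    logA a (x + y) ≤ logA a x + logA a y :=
  (concaveOn_logA ha).map_add_le logA_zero.ge hx hy

theorem sum_mul_map_sum_le {ι : Type*} [DecidableEq ι] (s : Finset ι) {f : ℝ → ℝ}
    (hf : ∀ x y, 0 ≤ x → 0 ≤ y → f (x + y) ≤ f x + f y) {x : ι → ℝ} (hx : ∀ i, 0 ≤ x i) :
    (∑ i ∈ s, x i) * f (∑ i ∈ s, x i)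
      ≤ ∑ i ∈ s, x i * f (x i) + ∑ i ∈ s, x i * f (∑ j ∈ s.erase i, x j) := by
  rw [← Finset.sum_add_distrib, Finset.sum_mul]
  gcongr with i hi
  rw [← mul_add, ← Finset.add_sum_erase s x hi]
  exact mul_le_mul_of_nonneg_left (hf _ _ (hx i) (Finset.sum_nonneg fun j _ => hx j)) (hx i)

section Expectation

variable {Ω : Type*} {mΩ : MeasurableSpace Ω} {μ : Measure Ω}

theorem integrable_logA_comp (ha : 0 < a) {T : Ω → ℝ} (hT0 : ∀ ω, 0 ≤ T ω)
    (hT : Integrable T μ) : Integrable (fun ω => logA a (T ω)) μ := by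
  refine (hT.const_mul ((a / exp 1) ^ a)).mono
    ((continuous_logA ha.le).comp_aestronglyMeasurable hT.1) (ae_of_all _ fun ω => ?_)
  rw [norm_of_nonneg (logA_nonneg ha.le (hT0 ω)), norm_of_nonneg (by have := hT0 ω; positivity)]
  exact logA_le_mul ha (hT0 ω)

theorem ProbabilityTheory.IndepFun.integral_mul_logA_le [IsProbabilityMeasure μ] (ha : 0 < a)
    {X T : Ω → ℝ} (hXT : IndepFun X T μ) (hX0 : ∀ ω, 0 ≤ X ω) (hT0 : ∀ ω, 0 ≤ T ω)
    (hX : Integrable X μ) (hT : Integrable T μ) :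
    ∫ ω, X ω * logA a (T ω) ∂μ ≤ (∫ ω, X ω ∂μ) * logA a (∫ ω, T ω ∂μ) := by
  have hjensen : ∫ ω, logA a (T ω) ∂μ ≤ logA a (∫ ω, T ω ∂μ) :=
    (concaveOn_logA ha).le_map_integral (continuous_logA ha.le).continuousOn isClosed_Ici
      (ae_of_all _ hT0) hT (integrable_logA_comp ha hT0 hT)
  have hfactor : ∫ ω, X ω * logA a (T ω) ∂μ = (∫ ω, X ω ∂μ) * ∫ ω, logA a (T ω) ∂μ :=
    (hXT.comp measurable_id (continuous_logA ha.le).measurable).integral_fun_mul_eq_mul_integral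
      hX.1 (integrable_logA_comp ha hT0 hT).1
  rw [hfactor]
  exact mul_le_mul_of_nonneg_left hjensen (integral_nonneg hX0)

theorem ProbabilityTheory.iIndepFun.lintegral_sum_mul_logA_sum_erase_le [IsProbabilityMeasure μ]
    (ha : 0 < a) {ι : Type*} [Fintype ι] [DecidableEq ι] {X : ι → Ω → ℝ} (hXindep : iIndepFun X μ)
    (hX0 : ∀ i ω, 0 ≤ X i ω) (hX : ∀ i, Integrable (X i) μ) :
    ∫⁻ ω, ENNReal.ofReal (∑ i, X i ω * logA a (∑ j ∈ Finset.univ.erase i, X j ω)) ∂μ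
      ≤ ENNReal.ofReal ((∫ ω, ∑ i, X i ω ∂μ) * logA a (∫ ω, ∑ i, X i ω ∂μ)) := by
  set T : ι → Ω → ℝ := fun i ω => ∑ j ∈ Finset.univ.erase i, X j ω
  have hT0 : ∀ i ω, 0 ≤ T i ω := fun i ω => Finset.sum_nonneg fun j _ => hX0 j ω
  have hT : ∀ i, Integrable (T i) μ := fun i => integrable_finsetSum _ fun j _ => hX j
  have hind : ∀ i, IndepFun (X i) (T i) μ := fun i => by
    simpa only [T, Finset.sum_fn] using (hXindep.indepFun_finsetSum_of_notMem₀
      (fun j => (hX j).aemeasurable) (Finset.notMem_erase i Finset.univ)).symm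
  have hprod : ∀ i, Integrable (fun ω => X i ω * logA a (T i ω)) μ := fun i =>
    ((hind i).comp measurable_id (continuous_logA ha.le).measurable).integrable_mul (hX i)
      (integrable_logA_comp ha (hT0 i) (hT i))
  rw [← ofReal_integral_eq_lintegral_ofReal (integrable_finsetSum _ fun i _ => hprod i)
    (ae_of_all _ fun ω => Finset.sum_nonneg fun i _ => mul_nonneg (hX0 i ω)
      (logA_nonneg ha.le (hT0 i ω)))]
  refine ENNReal.ofReal_le_ofReal ?_
  rw [integral_finsetSum _ fun i _ => hprod i, integral_finsetSum _ fun i _ => hX i,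
    Finset.sum_mul]
  refine Finset.sum_le_sum fun i _ => ((hind i).integral_mul_logA_le ha (hX0 i) (hT0 i) (hX i)
    (hT i)).trans (mul_le_mul_of_nonneg_left ?_ (integral_nonneg (hX0 i)))
  refine monotone_logA ha.le ?_
  rw [integral_finsetSum _ fun j _ => hX j]
  exact Finset.sum_le_sum_of_subset_of_nonneg (Finset.erase_subset i _)
    fun j _ _ => integral_nonneg (hX0 j)

end Expectation

end

/-- for independent nonnegative integrable random variables
`X_1, …, X_N` with sum `S`,
`E[S log^{(a)}(S)] ≤ E[S] log^{(a)}(E[S]) + ∑_i E[X_i log^{(a)}(X_i)]`,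
the expectations of the nonnegative quantities being taken in `[0,∞]`. -/
theorem sum_logA_inequality
    {Ω : Type*} {mΩ : MeasurableSpace Ω} (μ : Measure Ω) [IsProbabilityMeasure μ]
    (a : ℝ) (ha : 1 ≤ a) (N : ℕ) (X : Fin N → Ω → ℝ)
    (hXnonneg : ∀ i ω, 0 ≤ X i ω)
    (hXint : ∀ i, Integrable (X i) μ)
    (hXindep : iIndepFun X μ) :
    ∫⁻ ω, ENNReal.ofReal ((∑ i, X i ω) * logA a (∑ i, X i ω)) ∂μ
      ≤ ENNReal.ofReal ((∫ ω, ∑ i, X i ω ∂μ) * logA a (∫ ω, ∑ i, X i ω ∂μ))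
        + ∑ i, ∫⁻ ω, ENNReal.ofReal (X i ω * logA a (X i ω)) ∂μ := by
  have ha0 : 0 < a := by linarith
  have hterm : ∀ i, AEMeasurable (fun ω => ENNReal.ofReal (X i ω * logA a (X i ω))) μ := fun i =>
    ((hXint i).aemeasurable.mul ((continuous_logA ha0.le).measurable.comp_aemeasurable
      (hXint i).aemeasurable)).ennreal_ofReal
  have hpointwise : ∀ ω, ENNReal.ofReal ((∑ i, X i ω) * logA a (∑ i, X i ω))
      ≤ ∑ i, ENNReal.ofReal (X i ω * logA a (X i ω))
        + ENNReal.ofReal (∑ i, X i ω * logA a (∑ j ∈ Finset.univ.erase i, X j ω)) := fun ω => by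
    rw [← ENNReal.ofReal_sum_of_nonneg fun i _ =>
      mul_nonneg (hXnonneg i ω) (logA_nonneg ha0.le (hXnonneg i ω))]
    exact (ENNReal.ofReal_le_ofReal (sum_mul_map_sum_le _ (fun x y => logA_add_le ha0)
      (hXnonneg · ω))).trans ENNReal.ofReal_add_le
  calc _ ≤ ∫⁻ ω, (∑ i, ENNReal.ofReal (X i ω * logA a (X i ω))
          + ENNReal.ofReal (∑ i, X i ω * logA a (∑ j ∈ Finset.univ.erase i, X j ω))) ∂μ :=
        lintegral_mono hpointwise
    _ = ∑ i, ∫⁻ ω, ENNReal.ofReal (X i ω * logA a (X i ω)) ∂μ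
          + ∫⁻ ω, ENNReal.ofReal (∑ i, X i ω * logA a (∑ j ∈ Finset.univ.erase i, X j ω)) ∂μ := by
        rw [lintegral_add_left' (Finset.aemeasurable_fun_sum _ fun i _ => hterm i),
          lintegral_finsetSum' _ fun i _ => hterm i]
    _ ≤ _ := by
        rw [add_comm]
        gcongr
        exact hXindep.lintegral_sum_mul_logA_sum_erase_le ha0 hXnonneg hXint
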